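/- Let A be an associative unital ℝ-algebra, X^1,…,X^D ∈ A, and η an invertible symmetric real D×D matrix. With H^{ab}, H, T^{ab}, □ and lowered indices as defined, for every index b the exact algebraic identity ∑_a [X_a, T^{ab}] = (1/2)·∑_{c,d} η_{cd} {□X^c, [X^b, X^d]} holds. (Paper eq. (Ward-cons), second line: the matrix energy-momentum tensor satisfies [X_a,T^{ab}] = (1/2){□X_c,[X^b,X^c]}, the exact form of the tangential conservation law.) -/
import Mathlib

open Matrix

/-! Auxiliary definitions: commutator and anticommutator. -/

def cmm {A : Type*} [Ring A] (x y : A) : A := x * y - y * x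

def acmm {A : Type*} [Ring A] (x y : A) : A := x * y + y * x

/-- The basic per-index combination `2·g₁ − g₂ − 2·g₃` appearing in the Ward identity. -/
def FF {A : Type*} [Ring A] (B a e c d : A) : A :=
  cmm e (acmm (cmm a c) (cmm B d)) + cmm e (acmm (cmm a c) (cmm B d))
    - cmm B (cmm a c * cmm e d)
    - acmm (cmm a (cmm e c)) (cmm B d) - acmm (cmm a (cmm e c)) (cmm B d)

/-- The octahedral symmetrization of `FF` vanishes identically. -/
lemma FF_orbit {A : Type*} [Ring A] (B a e c d : A) :
    FF B a e c d + FF B e a c d + FF B a e d c + FF B e a d c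
      + FF B c d a e + FF B d c a e + FF B c d e a + FF B d c e a = 0 := by
  simp only [FF, cmm, acmm]
  noncomm_ring

lemma hlp_comm_sum {A : Type*} [Ring A] [Algebra ℝ A] {ι : Type*} {t : Finset ι}
    (s : ι → ℝ) (Y : ι → A) (M : A) :
    (∑ e ∈ t, s e • Y e) * M - M * ∑ e ∈ t, s e • Y e
      = ∑ e ∈ t, s e • (Y e * M - M * Y e) := by
  rw [Finset.sum_mul, Finset.mul_sum, ← Finset.sum_sub_distrib]
  exact Finset.sum_congr rfl fun e _ => by
    rw [smul_mul_assoc, mul_smul_comm, ← smul_sub]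

lemma hlp_comm_sum' {A : Type*} [Ring A] {ι : Type*} {t : Finset ι}
    (P : ι → A) (Y : A) :
    Y * (∑ i ∈ t, P i) - (∑ i ∈ t, P i) * Y = ∑ i ∈ t, (Y * P i - P i * Y) := by
  rw [Finset.mul_sum, Finset.sum_mul, ← Finset.sum_sub_distrib]

lemma hlp_comm_smul {A : Type*} [Ring A] [Algebra ℝ A] (s : ℝ) (P Y : A) :
    Y * (s • P) - (s • P) * Y = s • (Y * P - P * Y) := by
  rw [smul_mul_assoc, mul_smul_comm, ← smul_sub]

lemma hlp_acmm_sum {A : Type*} [Ring A] {ι : Type*} {t : Finset ι}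
    (P : ι → A) (C : A) :
    acmm (∑ i ∈ t, P i) C = ∑ i ∈ t, acmm (P i) C := by
  simp only [acmm, Finset.sum_mul, Finset.mul_sum, ← Finset.sum_add_distrib]

lemma hlp_acmm_smul {A : Type*} [Ring A] [Algebra ℝ A] (s : ℝ) (P C : A) :
    acmm (s • P) C = s • acmm P C := by
  simp only [acmm, smul_mul_assoc, mul_smul_comm, smul_add]

lemma hlp_swap4 {M : Type*} [AddCommMonoid M] {D : ℕ}
    (F : Fin D → Fin D → Fin D → Fin D → M) :
    ∑ c, ∑ d, ∑ a, ∑ e, F a e c d = ∑ a, ∑ e, ∑ c, ∑ d, F a e c d := by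
  have h1 : ∀ (G : Fin D → Fin D → M),
      (∑ p : Fin D × Fin D, G p.1 p.2) = ∑ x, ∑ y, G x y := fun G => by
    rw [← Finset.univ_product_univ, Finset.sum_product']
  calc ∑ c, ∑ d, ∑ a, ∑ e, F a e c d
      = ∑ c, ∑ d, ∑ p : Fin D × Fin D, F p.1 p.2 c d :=
        Finset.sum_congr rfl fun c _ => Finset.sum_congr rfl fun d _ =>
          (h1 (fun x y => F x y c d)).symm
    _ = ∑ q : Fin D × Fin D, ∑ p : Fin D × Fin D, F p.1 p.2 q.1 q.2 :=
        (h1 (fun x y => ∑ p : Fin D × Fin D, F p.1 p.2 x y)).symm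
    _ = ∑ p : Fin D × Fin D, ∑ q : Fin D × Fin D, F p.1 p.2 q.1 q.2 := Finset.sum_comm
    _ = ∑ a, ∑ e, ∑ q : Fin D × Fin D, F a e q.1 q.2 :=
        h1 (fun x y => ∑ q : Fin D × Fin D, F x y q.1 q.2)
    _ = ∑ a, ∑ e, ∑ c, ∑ d, F a e c d :=
        Finset.sum_congr rfl fun a _ => Finset.sum_congr rfl fun e _ =>
          h1 (fun x y => F a e x y)

/-- Key symmetrization lemma: if the octahedral symmetrization of `f` vanishes
pointwise, then the `η ⊗ η`-weighted sum of `f` vanishes. -/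
lemma sym_sum_zero {A : Type*} [AddCommGroup A] [Module ℝ A] {D : ℕ}
    (η : Matrix (Fin D) (Fin D) ℝ) (hsym : ∀ i j, η i j = η j i)
    (f : Fin D → Fin D → Fin D → Fin D → A)
    (hf : ∀ a e c d, f a e c d + f e a c d + f a e d c + f e a d c
        + f c d a e + f d c a e + f c d e a + f d c e a = 0) :
    ∑ a, ∑ e, ∑ c, ∑ d, (η a e * η c d) • f a e c d = 0 := by
  have g1 : ∀ g : Fin D → Fin D → Fin D → Fin D → A,
      (∑ a, ∑ e, ∑ c, ∑ d, (η a e * η c d) • g a e c d)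
        = ∑ a, ∑ e, ∑ c, ∑ d, (η a e * η c d) • g e a c d := by
    intro g
    rw [Finset.sum_comm]
    exact Finset.sum_congr rfl fun a _ => Finset.sum_congr rfl fun e _ =>
      Finset.sum_congr rfl fun c _ => Finset.sum_congr rfl fun d _ => by rw [hsym e a]
  have g2 : ∀ g : Fin D → Fin D → Fin D → Fin D → A,
      (∑ a, ∑ e, ∑ c, ∑ d, (η a e * η c d) • g a e c d)
        = ∑ a, ∑ e, ∑ c, ∑ d, (η a e * η c d) • g a e d c := by
    intro g
    refine Finset.sum_congr rfl fun a _ => Finset.sum_congr rfl fun e _ => ?_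
    rw [Finset.sum_comm]
    exact Finset.sum_congr rfl fun c _ => Finset.sum_congr rfl fun d _ => by rw [hsym d c]
  have g3 : ∀ g : Fin D → Fin D → Fin D → Fin D → A,
      (∑ a, ∑ e, ∑ c, ∑ d, (η a e * η c d) • g a e c d)
        = ∑ a, ∑ e, ∑ c, ∑ d, (η a e * η c d) • g c d a e := by
    intro g
    rw [← hlp_swap4 (fun a e c d => (η a e * η c d) • g a e c d)]
    exact Finset.sum_congr rfl fun a _ => Finset.sum_congr rfl fun e _ =>
      Finset.sum_congr rfl fun c _ => Finset.sum_congr rfl fun d _ => by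
        rw [mul_comm (η c d) (η a e)]
  have e1 : (∑ a, ∑ e, ∑ c, ∑ d, (η a e * η c d) • f a e c d)
      = ∑ a, ∑ e, ∑ c, ∑ d, (η a e * η c d) • f e a c d := g1 f
  have e2 : (∑ a, ∑ e, ∑ c, ∑ d, (η a e * η c d) • f a e c d)
      = ∑ a, ∑ e, ∑ c, ∑ d, (η a e * η c d) • f a e d c := g2 f
  have e3 : (∑ a, ∑ e, ∑ c, ∑ d, (η a e * η c d) • f a e c d)
      = ∑ a, ∑ e, ∑ c, ∑ d, (η a e * η c d) • f e a d c :=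
    (g1 f).trans (g2 fun a e c d => f e a c d)
  have e4 : (∑ a, ∑ e, ∑ c, ∑ d, (η a e * η c d) • f a e c d)
      = ∑ a, ∑ e, ∑ c, ∑ d, (η a e * η c d) • f c d a e := g3 f
  have e5 : (∑ a, ∑ e, ∑ c, ∑ d, (η a e * η c d) • f a e c d)
      = ∑ a, ∑ e, ∑ c, ∑ d, (η a e * η c d) • f d c a e :=
    (g3 f).trans (g2 fun a e c d => f c d a e)
  have e6 : (∑ a, ∑ e, ∑ c, ∑ d, (η a e * η c d) • f a e c d)
      = ∑ a, ∑ e, ∑ c, ∑ d, (η a e * η c d) • f c d e a :=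
    (g3 f).trans (g1 fun a e c d => f c d a e)
  have e7 : (∑ a, ∑ e, ∑ c, ∑ d, (η a e * η c d) • f a e c d)
      = ∑ a, ∑ e, ∑ c, ∑ d, (η a e * η c d) • f d c e a :=
    (g3 f).trans ((g1 fun a e c d => f c d a e).trans (g2 fun a e c d => f c d e a))
  have hzero : ∑ a, ∑ e, ∑ c, ∑ d, (η a e * η c d) •
      (f a e c d + f e a c d + f a e d c + f e a d c
        + f c d a e + f d c a e + f c d e a + f d c e a) = 0 :=
    Finset.sum_eq_zero fun a _ => Finset.sum_eq_zero fun e _ =>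
      Finset.sum_eq_zero fun c _ => Finset.sum_eq_zero fun d _ => by
        rw [hf a e c d, smul_zero]
  simp only [smul_add, Finset.sum_add_distrib] at hzero
  rw [← e1, ← e2, ← e3, ← e4, ← e5, ← e6, ← e7] at hzero
  set x := ∑ a, ∑ e, ∑ c, ∑ d, (η a e * η c d) • f a e c d with hxdef
  have h8 : (8 : ℝ) • x = 0 := by
    rw [show (8 : ℝ) • x = x + x + x + x + x + x + x + x from by module]
    exact hzero
  have h9 := congrArg (fun z => (8 : ℝ)⁻¹ • z) h8
  simp only [smul_smul, smul_zero] at h9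
  norm_num at h9
  exact h9

lemma hlp_final {A : Type*} [AddCommGroup A] [Module ℝ A] (x y z : A)
    (h : x + x - y - z - z = 0) :
    (1 / 2 : ℝ) • x - (1 / 4 : ℝ) • y = (1 / 2 : ℝ) • z := by
  have hy : y = x + x - (z + z) := by
    have h2 : y - (x + x - (z + z)) = -(x + x - y - z - z) := by abel
    have h3 : y - (x + x - (z + z)) = 0 := by rw [h2, h, neg_zero]
    exact sub_eq_zero.mp h3
  rw [hy]
  module

/-- Exact matrix identity (paper eq. (Ward-cons), second line): the matrix
energy-momentum tensor `T^{ab} = H^{ab} − (1/4) η^{ab} H` satisfies the tangential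
conservation law `[X_a, T^{ab}] = (1/2){□X_c, [X^b,X^c]}`. -/
theorem ward_identity_T
    (A : Type*) [Ring A] [Algebra ℝ A] (D : ℕ)
    (X : Fin D → A) (η : Matrix (Fin D) (Fin D) ℝ)
    (hηsymm : η.IsSymm) (hηu : IsUnit η)
    (Xl : Fin D → A) (hXl : ∀ a, Xl a = ∑ b, η a b • X b)
    (Hm : Fin D → Fin D → A)
    (hHm : ∀ a b, Hm a b = (1 / 2 : ℝ) • ∑ c, ∑ d, η c d •
      ((X a * X c - X c * X a) * (X b * X d - X d * X b)
        + (X b * X d - X d * X b) * (X a * X c - X c * X a)))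
    (Hs : A)
    (hHs : Hs = ∑ a, ∑ b, ∑ c, ∑ d, (η a c * η b d) •
      ((X a * X b - X b * X a) * (X c * X d - X d * X c)))
    (box : A → A)
    (hbox : ∀ Y, box Y = ∑ a, ∑ c, η a c •
      (X a * (X c * Y - Y * X c) - (X c * Y - Y * X c) * X a))
    (T : Fin D → Fin D → A)
    (hT : ∀ a b, T a b = Hm a b - ((1 / 4 : ℝ) * η⁻¹ a b) • Hs) :
    ∀ b, ∑ a, (Xl a * T a b - T a b * Xl a) =
      (1 / 2 : ℝ) • ∑ c, ∑ d, η c d •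
        (box (X c) * (X b * X d - X d * X b)
          + (X b * X d - X d * X b) * box (X c)) := by
  intro b
  have hsym : ∀ i j, η i j = η j i := fun i j => hηsymm.apply j i
  have hdet : IsUnit η.det := (Matrix.isUnit_iff_isUnit_det η).mp hηu
  have hinv : η⁻¹ * η = 1 := Matrix.nonsing_inv_mul η hdet
  have hinvsymm : ∀ i j, η⁻¹ i j = η⁻¹ j i := by
    have h1 : (η⁻¹)ᵀ = η⁻¹ := by rw [Matrix.transpose_nonsing_inv, hηsymm.eq]
    intro i j
    conv_lhs => rw [← h1]
    rfl
  -- rewritten hypotheses in terms of cmm/acmm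
  have hHm' : ∀ a, Hm a b = (1 / 2 : ℝ) • ∑ c, ∑ d, η c d •
      acmm (cmm (X a) (X c)) (cmm (X b) (X d)) := fun a => by rw [hHm]; rfl
  have hHs' : Hs = ∑ p, ∑ q, ∑ r, ∑ s, (η p r * η q s) •
      (cmm (X p) (X q) * cmm (X r) (X s)) := by rw [hHs]; rfl
  have hbox' : ∀ Y, box Y = ∑ p, ∑ q, η p q • cmm (X p) (cmm (X q) Y) :=
    fun Y => by rw [hbox]; rfl
  -- Step 1: inverse metric contraction
  have hXb : ∑ a, η⁻¹ a b • Xl a = X b := by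
    simp only [hXl, Finset.smul_sum, smul_smul]
    rw [Finset.sum_comm]
    calc ∑ e, ∑ a, (η⁻¹ a b * η a e) • X e
        = ∑ e, ((η⁻¹ * η) b e) • X e := by
          refine Finset.sum_congr rfl fun e _ => ?_
          rw [← Finset.sum_smul, Matrix.mul_apply]
          congr 1
          exact Finset.sum_congr rfl fun a _ => by rw [hinvsymm a b]
      _ = ∑ e, ((1 : Matrix (Fin D) (Fin D) ℝ) b e) • X e := by rw [hinv]
      _ = X b := by simp [Matrix.one_apply]
  -- Step 2: split off the Hs part
  have hsplit0 : ∑ a, (Xl a * T a b - T a b * Xl a)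
      = (∑ a, (Xl a * Hm a b - Hm a b * Xl a))
        - (1 / 4 : ℝ) • (X b * Hs - Hs * X b) := by
    have h1 : ∀ a, Xl a * T a b - T a b * Xl a
        = (Xl a * Hm a b - Hm a b * Xl a)
          - ((1 / 4 : ℝ) * η⁻¹ a b) • (Xl a * Hs - Hs * Xl a) := fun a => by
      rw [hT, mul_sub, sub_mul, mul_smul_comm, smul_mul_assoc, smul_sub]
      abel
    rw [Finset.sum_congr rfl fun a _ => h1 a, Finset.sum_sub_distrib]
    congr 1
    have h2 : ∀ a, ((1 / 4 : ℝ) * η⁻¹ a b) • (Xl a * Hs - Hs * Xl a)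
        = (1 / 4 : ℝ) • ((η⁻¹ a b • Xl a) * Hs - Hs * (η⁻¹ a b • Xl a)) := fun a => by
      rw [smul_mul_assoc, mul_smul_comm, ← smul_sub, smul_smul]
    rw [Finset.sum_congr rfl fun a _ => h2 a, ← Finset.smul_sum]
    congr 1
    rw [Finset.sum_sub_distrib, ← Finset.sum_mul, ← Finset.mul_sum, hXb]
  -- Step 3: canonical quadruple-sum forms
  have hA : ∑ a, (Xl a * Hm a b - Hm a b * Xl a)
      = (1 / 2 : ℝ) • ∑ a, ∑ e, ∑ c, ∑ d, (η a e * η c d) •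
          cmm (X e) (acmm (cmm (X a) (X c)) (cmm (X b) (X d))) := by
    rw [Finset.smul_sum]
    refine Finset.sum_congr rfl fun a _ => ?_
    rw [hHm' a, hXl a, mul_smul_comm, smul_mul_assoc, ← smul_sub]
    congr 1
    rw [hlp_comm_sum]
    refine Finset.sum_congr rfl fun e _ => ?_
    rw [hlp_comm_sum', Finset.smul_sum]
    refine Finset.sum_congr rfl fun c _ => ?_
    rw [hlp_comm_sum', Finset.smul_sum]
    refine Finset.sum_congr rfl fun d _ => ?_
    rw [hlp_comm_smul, smul_smul]
    rfl
  have hB : X b * Hs - Hs * X b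
      = ∑ a, ∑ e, ∑ c, ∑ d, (η a e * η c d) •
          cmm (X b) (cmm (X a) (X c) * cmm (X e) (X d)) := by
    have E : X b * Hs - Hs * X b
        = ∑ p, ∑ q, ∑ r, ∑ s, (η p r * η q s) •
            cmm (X b) (cmm (X p) (X q) * cmm (X r) (X s)) := by
      rw [hHs', hlp_comm_sum']
      refine Finset.sum_congr rfl fun p _ => ?_
      rw [hlp_comm_sum']
      refine Finset.sum_congr rfl fun q _ => ?_
      rw [hlp_comm_sum']
      refine Finset.sum_congr rfl fun r _ => ?_
      rw [hlp_comm_sum']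
      refine Finset.sum_congr rfl fun s _ => ?_
      rw [hlp_comm_smul]
      rfl
    exact E.trans (Finset.sum_congr rfl fun p _ => Finset.sum_comm)
  have hC : (1 / 2 : ℝ) • (∑ c, ∑ d, η c d • acmm (box (X c)) (cmm (X b) (X d)))
      = (1 / 2 : ℝ) • ∑ a, ∑ e, ∑ c, ∑ d, (η a e * η c d) •
          acmm (cmm (X a) (cmm (X e) (X c))) (cmm (X b) (X d)) := by
    congr 1
    rw [← hlp_swap4 (fun a e c d => (η a e * η c d) •
      acmm (cmm (X a) (cmm (X e) (X c))) (cmm (X b) (X d)))]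
    refine Finset.sum_congr rfl fun c _ => Finset.sum_congr rfl fun d _ => ?_
    rw [hbox' (X c), hlp_acmm_sum, Finset.smul_sum]
    refine Finset.sum_congr rfl fun a _ => ?_
    rw [hlp_acmm_sum, Finset.smul_sum]
    refine Finset.sum_congr rfl fun e _ => ?_
    rw [hlp_acmm_smul, smul_smul, mul_comm (η c d) (η a e)]
  -- Step 4: the symmetrization identity
  have h0 : (∑ a, ∑ e, ∑ c, ∑ d, (η a e * η c d) •
        cmm (X e) (acmm (cmm (X a) (X c)) (cmm (X b) (X d))))
      + (∑ a, ∑ e, ∑ c, ∑ d, (η a e * η c d) •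
        cmm (X e) (acmm (cmm (X a) (X c)) (cmm (X b) (X d))))
      - (∑ a, ∑ e, ∑ c, ∑ d, (η a e * η c d) •
        cmm (X b) (cmm (X a) (X c) * cmm (X e) (X d)))
      - (∑ a, ∑ e, ∑ c, ∑ d, (η a e * η c d) •
        acmm (cmm (X a) (cmm (X e) (X c))) (cmm (X b) (X d)))
      - (∑ a, ∑ e, ∑ c, ∑ d, (η a e * η c d) •
        acmm (cmm (X a) (cmm (X e) (X c))) (cmm (X b) (X d))) = 0 := by
    have k := sym_sum_zero η hsym
      (fun a e c d => FF (X b) (X a) (X e) (X c) (X d))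
      (fun a e c d => FF_orbit (X b) (X a) (X e) (X c) (X d))
    rw [← k]
    simp only [FF, smul_add, smul_sub, Finset.sum_add_distrib, Finset.sum_sub_distrib]
  -- Final assembly
  suffices h : ∑ a, (Xl a * T a b - T a b * Xl a)
      = (1 / 2 : ℝ) • ∑ c, ∑ d, η c d • acmm (box (X c)) (cmm (X b) (X d)) by
    simpa only [cmm, acmm] using h
  rw [hsplit0, hA, hB, hC]
  exact hlp_final _ _ _ h0
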